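/- Let k ≥ 1 and n ≥ binom(k+1, 2). An S-block [α|β] ∈ S-Block(n) belongs to A(n, k) if and only if [τ_k(n)|τ'_k(n)] ⪯ [α|β] and [α|β] ⪯ [γ|γ] for some γ ∈ Dis_k(n). Consequently A(n, k) is an amphora in S-Block(n) with minimum element [τ_k(n)|τ'_k(n)] and with antichain of maximal elements (Max)^n_k = {[γ|γ] : γ ∈ Dis_k(n)}. -/

import Mathlib

/-!
Subtracting the staircase `(k, k-1, …, 1)` from a partition in `Dis_k(n)` leaves a non-increasing
sequence of `k` non-negative parts summing to `n - C(k+1,2)`. Among those, the balanced sequence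
`(q+1, …, q+1, q, …, q)` has the smallest prefix sums and `(n - C(k+1,2), 0, …, 0)` the largest;
adding the staircase back turns them into `τ_k(n)` and `τ'_k(n)`. Concretely, each prefix comparison
holds either termwise on the prefix or, the total sums being equal, termwise on the complementary
suffix. Conversely, a sequence with positive parts that majorizes another is no longer than it, so
`τ_k(n) ⪯ α` forces at most `k` parts in `α` and `β ⪯ τ'_k(n)` at least `k` in `β`; an S-block has
`len β ≤ len α`, hence both have exactly `k` parts. The witness `γ` is `β` itself.
-/

/-- A partition: a non-increasing list of positive integers. -/
def IsPartition (π : List ℕ) : Prop :=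
  π.Pairwise (· ≥ ·) ∧ ∀ x ∈ π, 0 < x

/-- A partition of `n` into distinct positive parts, listed in (strictly) decreasing order. -/
def DisPart (n : ℕ) (γ : List ℕ) : Prop :=
  γ.Pairwise (· > ·) ∧ (∀ x ∈ γ, 0 < x) ∧ γ.sum = n

/-- A partition of `n` into exactly `k` distinct positive parts. -/
def DisPartK (n k : ℕ) (γ : List ℕ) : Prop :=
  DisPart n γ ∧ γ.length = k

/-- `β` majorizes `α`. -/
def Majorizes (β α : List ℕ) : Prop :=
  β.sum = α.sum ∧ ∀ k ≤ min α.length β.length, (α.take k).sum ≤ (β.take k).sum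

/-- α(π): the parts `d_i − i + 1` for 1-based indices `i` with `d_i ≥ i`. -/
def alphaOf (π : List ℕ) : List ℕ :=
  (List.range π.length).filterMap
    (fun i => if i + 1 ≤ π.getD i 0 then some (π.getD i 0 - i) else none)

/-- Number of boxes of the Ferrers diagram strictly below the diagonal in (1-based) column `j`. -/
def betaColCount (π : List ℕ) (j : ℕ) : ℕ :=
  ((List.range π.length).filter (fun i => decide (j ≤ i ∧ j ≤ π.getD i 0))).length

/-- β(π): the positive column counts below the main diagonal, in decreasing order. -/
def betaOf (π : List ℕ) : List ℕ :=
  ((List.range π.length).map (fun j => betaColCount π (j + 1))).filter (fun c => c != 0)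

/-- The mark (modified Durfee number) `m(π) = max {i : d_i ≥ i − 1}` (1-based indices). -/
noncomputable def mark (π : List ℕ) : ℕ :=
  sSup {i : ℕ | 1 ≤ i ∧ i ≤ π.length ∧ i ≤ π.getD (i - 1) 0 + 1}

def IsIndepSet {V : Type*} (G : SimpleGraph V) (s : Set V) : Prop :=
  s.Pairwise (fun v w => ¬ G.Adj v w)

/-- `(K, S)` is a KS-partition of `G`. -/
def IsKS {V : Type*} [Fintype V] (G : SimpleGraph V) (K S : Finset V) : Prop :=
  (∀ v, v ∈ K ∨ v ∈ S) ∧ Disjoint K S ∧ G.IsClique (K : Set V) ∧ IsIndepSet G (S : Set V)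

def IsSplit {V : Type*} [Fintype V] (G : SimpleGraph V) : Prop :=
  ∃ K S, IsKS G K S

noncomputable def cliqueNum {V : Type*} [Fintype V] (G : SimpleGraph V) : ℕ :=
  sSup {n | ∃ s : Finset V, G.IsNClique n s}

noncomputable def indepNum {V : Type*} [Fintype V] (G : SimpleGraph V) : ℕ :=
  sSup {n | ∃ s : Finset V, IsIndepSet G (s : Set V) ∧ s.card = n}

/-- A balanced split graph: some KS-partition is simultaneously K-max and S-max. -/
def IsBalancedSplit {V : Type*} [Fintype V] (G : SimpleGraph V) : Prop :=
  IsSplit G ∧ ∃ K S, IsKS G K S ∧ K.card = cliqueNum G ∧ S.card = indepNum G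

/-- An unbalanced split graph. -/
def IsUnbalancedSplit {V : Type*} [Fintype V] (G : SimpleGraph V) : Prop :=
  IsSplit G ∧ ¬ ∃ K S, IsKS G K S ∧ K.card = cliqueNum G ∧ S.card = indepNum G

/-- `π` is the degree sequence of `G` (degrees in non-increasing order). -/
def HasDegSeq {V : Type*} [Fintype V] (G : SimpleGraph V) [DecidableRel G.Adj]
    (π : List ℕ) : Prop :=
  π.Pairwise (· ≥ ·) ∧ (π : Multiset ℕ) = Finset.univ.val.map (fun v => G.degree v)

def NoIsolated {V : Type*} [Fintype V] (G : SimpleGraph V) [DecidableRel G.Adj] : Prop :=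
  ∀ v, 0 < G.degree v

def IsThreshold {V : Type*} [Fintype V] (G : SimpleGraph V) : Prop :=
  ∃ (t : ℝ) (a : V → ℝ), 0 < t ∧ (∀ v, 0 < a v) ∧
    ∀ s : Finset V, (IsIndepSet G (s : Set V) ↔ ∑ v ∈ s, a v ≤ t)

noncomputable def chromNum {V : Type*} [Fintype V] (G : SimpleGraph V) : ℕ :=
  sInf {n | G.Colorable n}

def IsNG {V : Type*} [Fintype V] (G : SimpleGraph V) : Prop :=
  chromNum G + chromNum Gᶜ = Fintype.card V + 1

def ngA {V : Type*} [Fintype V] (G : SimpleGraph V) [DecidableRel G.Adj] : Set V :=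
  {v | G.degree v = chromNum G - 1}

def IsNG1 {V : Type*} [Fintype V] (G : SimpleGraph V) [DecidableRel G.Adj] : Prop :=
  IsNG G ∧ G.IsClique (ngA G)

def IsNG2 {V : Type*} [Fintype V] (G : SimpleGraph V) [DecidableRel G.Adj] : Prop :=
  IsNG G ∧ IsIndepSet G (ngA G)

def IsNG3 {V : Type*} [Fintype V] (G : SimpleGraph V) [DecidableRel G.Adj] : Prop :=
  IsNG G ∧ Nonempty ((G.induce (ngA G)) ≃g SimpleGraph.cycleGraph 5)

/-- `[α|β]` is an S-block for the integer `n`. -/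
def IsSBlock (n : ℕ) (α β : List ℕ) : Prop :=
  DisPart n α ∧ DisPart n β ∧ Majorizes β α ∧
    (α.length = β.length ∨ α.length = β.length + 1)

/-- `[α₁|β₁] ⪰ [α₂|β₂]` in the block order. -/
def BlockMaj (α₁ β₁ α₂ β₂ : List ℕ) : Prop :=
  Majorizes α₁ α₂ ∧ Majorizes β₂ β₁

/-- τ'_k(n) = (n − C(k,2), k−1, k−2, …, 2, 1). -/
def tauMax (n k : ℕ) : List ℕ :=
  (n - Nat.choose k 2) :: ((List.range (k - 1)).reverse.map (· + 1))

/-- τ_k(n): parts (k−i+1)+q+1 for 1 ≤ i ≤ r and (k−i+1)+q for r < i ≤ k,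
where n − C(k+1,2) = qk + r, 0 ≤ r < k. -/
def tauMin (n k : ℕ) : List ℕ :=
  (List.range k).map
    (fun i => (k - i) + (n - Nat.choose (k + 1) 2) / k +
      (if i < (n - Nat.choose (k + 1) 2) % k then 1 else 0))

/-- `β` covers `α` in `Dis(n)`. -/
def CoversDis (n : ℕ) (β α : List ℕ) : Prop :=
  DisPart n α ∧ DisPart n β ∧ Majorizes β α ∧ β ≠ α ∧
    ¬ ∃ γ, DisPart n γ ∧ Majorizes β γ ∧ Majorizes γ α ∧ γ ≠ α ∧ γ ≠ β

/-- `[α₁|β₁]` covers `[α₂|β₂]` in `S-Block(n)`. -/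
def BlockCovers (n : ℕ) (α₁ β₁ α₂ β₂ : List ℕ) : Prop :=
  IsSBlock n α₁ β₁ ∧ IsSBlock n α₂ β₂ ∧ BlockMaj α₁ β₁ α₂ β₂ ∧ ¬(α₁ = α₂ ∧ β₁ = β₂) ∧
    ¬ ∃ α β, IsSBlock n α β ∧ BlockMaj α₁ β₁ α β ∧ BlockMaj α β α₂ β₂ ∧
      ¬(α = α₁ ∧ β = β₁) ∧ ¬(α = α₂ ∧ β = β₂)

/-- `[α|β]` is a threshold-covered block: member of TC(n). -/
def InTC (n : ℕ) (α β : List ℕ) : Prop :=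
  IsSBlock n α β ∧ CoversDis n β α

def IsLubDis (n : ℕ) (a b c : List ℕ) : Prop :=
  Majorizes c a ∧ Majorizes c b ∧
    ∀ d, DisPart n d → Majorizes d a → Majorizes d b → Majorizes d c

def IsGlbDis (n : ℕ) (a b c : List ℕ) : Prop :=
  Majorizes a c ∧ Majorizes b c ∧
    ∀ d, DisPart n d → Majorizes a d → Majorizes b d → Majorizes c d

open Finset

namespace List

theorem sum_take_eq_sum_range_getD (l : List ℕ) (j : ℕ) :
    (l.take j).sum = ∑ i ∈ Finset.range j, l.getD i 0 := by
  induction l generalizing j with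
  | nil => simp
  | cons a t ih =>
    cases j with
    | zero => simp
    | succ j => simp [Finset.sum_range_succ', ih, add_comm]

theorem sum_eq_sum_range_getD (l : List ℕ) : l.sum = ∑ i ∈ Finset.range l.length, l.getD i 0 := by
  rw [← sum_take_eq_sum_range_getD, take_length]

theorem sum_range_getD_eq_sum {l : List ℕ} {k : ℕ} (h : l.length = k) :
    ∑ i ∈ Finset.range k, l.getD i 0 = l.sum := by
  rw [← h, sum_eq_sum_range_getD]

theorem Pairwise.getD_add_sub_le {l : List ℕ} (hl : l.Pairwise (· > ·)) {i j : ℕ}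
    (hij : i ≤ j) (hj : j < l.length) : l.getD j 0 + (j - i) ≤ l.getD i 0 := by
  induction j, hij using Nat.le_induction with
  | base => simp
  | succ j hij ih =>
    have hstep : l.getD (j + 1) 0 < l.getD j 0 := by
      simp only [getD_eq_getElem?_getD, getElem?_eq_getElem hj,
        getElem?_eq_getElem (Nat.lt_of_succ_lt hj), Option.getD_some]
      exact hl.rel_get_of_lt (a := ⟨j, by omega⟩) (b := ⟨j + 1, hj⟩) (Nat.lt_succ_self j)
    have := ih (by omega)
    omega

theorem Pairwise.length_sub_le_getD {l : List ℕ} (hl : l.Pairwise (· > ·))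
    (hpos : ∀ x ∈ l, 0 < x) {i : ℕ} (hi : i < l.length) : l.length - i ≤ l.getD i 0 := by
  have hlast : 0 < l.getD (l.length - 1) 0 := by
    rw [getD_eq_getElem?_getD, getElem?_eq_getElem (by omega), Option.getD_some]
    exact hpos _ (getElem_mem _)
  have := hl.getD_add_sub_le (i := i) (j := l.length - 1) (by omega) (by omega)
  omega

end List

theorem sum_range_le_sum_range_of_tail_le {f g : ℕ → ℕ} {j k : ℕ} (hjk : j ≤ k)
    (hsum : ∑ i ∈ range k, f i = ∑ i ∈ range k, g i) (htail : ∀ i ∈ Ico j k, g i ≤ f i) :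
    ∑ i ∈ range j, f i ≤ ∑ i ∈ range j, g i := by
  have hf := sum_range_add_sum_Ico f hjk
  have hg := sum_range_add_sum_Ico g hjk
  have := sum_le_sum htail
  omega

theorem majorizes_iff_sum_range_getD {β α : List ℕ} :
    Majorizes β α ↔ β.sum = α.sum ∧ ∀ j ≤ min α.length β.length,
      ∑ i ∈ range j, α.getD i 0 ≤ ∑ i ∈ range j, β.getD i 0 := by
  simp only [Majorizes, List.sum_take_eq_sum_range_getD]

theorem Majorizes.refl (α : List ℕ) : Majorizes α α :=
  ⟨rfl, fun _ _ => le_rfl⟩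

theorem Majorizes.length_le {β α : List ℕ} (hβ : ∀ x ∈ β, 0 < x) (h : Majorizes β α) :
    β.length ≤ α.length := by
  by_contra! hlt
  have hprefix := h.2 α.length (by omega)
  rw [List.take_length, ← h.1, ← List.sum_take_add_sum_drop β α.length] at hprefix
  obtain ⟨x, t, hxt⟩ := List.exists_cons_of_length_pos (l := β.drop α.length) (by simpa)
  have hx := hβ x (List.mem_of_mem_drop (hxt ▸ List.mem_cons_self))
  rw [hxt, List.sum_cons] at hprefix
  omega

theorem choose_two_add_self (k : ℕ) : k.choose 2 + k = (k + 1).choose 2 := by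
  rw [Nat.choose_succ_succ', Nat.choose_one_right, add_comm]

theorem sum_range_sub_self (k : ℕ) : ∑ i ∈ range k, (k - i) = (k + 1).choose 2 := by
  induction k with
  | zero => simp
  | succ k ih =>
    rw [sum_range_succ', ← choose_two_add_self, ← ih]
    simp only [Nat.add_sub_add_right, Nat.sub_zero]

section Tau

variable {n k : ℕ}

theorem tauMin_length (n k : ℕ) : (tauMin n k).length = k := by
  simp [tauMin]

theorem tauMin_getD {i : ℕ} (hi : i < k) :
    (tauMin n k).getD i 0 = k - i + (n - (k + 1).choose 2) / k +
      (if i < (n - (k + 1).choose 2) % k then 1 else 0) := by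
  rw [tauMin, List.getD_eq_getElem?_getD, List.getElem?_map, List.getElem?_range hi,
    Option.map_some, Option.getD_some]

theorem tauMin_getD_bounds {i : ℕ} (hi : i < k) :
    k - i + (n - (k + 1).choose 2) / k ≤ (tauMin n k).getD i 0 ∧
      (tauMin n k).getD i 0 ≤ k - i + (n - (k + 1).choose 2) / k + 1 := by
  rw [tauMin_getD hi]
  split <;> omega

theorem tauMin_sum (hk : 1 ≤ k) (hn : (k + 1).choose 2 ≤ n) : (tauMin n k).sum = n := by
  rw [List.sum_eq_sum_range_getD, tauMin_length,
    sum_congr rfl fun i hi => tauMin_getD (List.mem_range.mp hi), sum_add_distrib,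
    sum_add_distrib, sum_range_sub_self, sum_const, card_range, smul_eq_mul]
  set m := n - (k + 1).choose 2
  have hmod : m % k < k := Nat.mod_lt m hk
  have hcount : ∑ i ∈ range k, (if i < m % k then 1 else 0) = m % k := by
    rw [sum_boole, Nat.cast_id, show {i ∈ range k | i < m % k} = range (m % k) by
      ext i; simp only [mem_filter, mem_range]; omega, card_range]
  rw [hcount]
  have := Nat.div_add_mod m k
  omega

theorem tauMax_length (n : ℕ) (hk : 1 ≤ k) : (tauMax n k).length = k := by
  simp only [tauMax, List.length_cons, List.length_map, List.length_reverse, List.length_range]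
  omega

theorem tauMax_getD {i : ℕ} (hi : 1 ≤ i) (hik : i < k) : (tauMax n k).getD i 0 = k - i := by
  obtain ⟨j, rfl⟩ : ∃ j, i = j + 1 := ⟨i - 1, by omega⟩
  rw [tauMax, List.getD_cons_succ, List.getD_eq_getElem?_getD, List.getElem?_map,
    List.getElem?_reverse (by simpa using (by omega : j < k - 1)), List.length_range,
    List.getElem?_range (by omega), Option.map_some, Option.getD_some]
  omega

theorem tauMax_sum (hk : 1 ≤ k) (hn : (k + 1).choose 2 ≤ n) : (tauMax n k).sum = n := by
  have htail : ∑ i ∈ range (k - 1), (tauMax n k).getD (i + 1) 0 = k.choose 2 := by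
    rw [sum_congr rfl fun i hi => tauMax_getD (n := n) (Nat.succ_pos i)
      (by rw [mem_range] at hi; omega)]
    have := sum_range_sub_self (k - 1)
    rw [Nat.sub_add_cancel hk] at this
    rw [← this]
    exact sum_congr rfl fun i _ => by omega
  have hsplit := sum_range_succ' (fun i => (tauMax n k).getD i 0) (k - 1)
  rw [Nat.sub_add_cancel hk, htail] at hsplit
  rw [List.sum_eq_sum_range_getD, tauMax_length n hk, hsplit, tauMax, List.getD_cons_zero]
  have := choose_two_add_self k
  omega

theorem tauMax_pos (hk : 1 ≤ k) (hn : (k + 1).choose 2 ≤ n) : ∀ x ∈ tauMax n k, 0 < x := by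
  have := choose_two_add_self k
  simp only [tauMax, List.mem_cons, List.mem_map, List.mem_reverse]
  rintro x (rfl | ⟨i, -, rfl⟩) <;> omega

end Tau

section Extremal

variable {n k : ℕ}

theorem majorizes_tauMin (hk : 1 ≤ k) (hn : (k + 1).choose 2 ≤ n) {α : List ℕ}
    (hα : DisPartK n k α) : Majorizes α (tauMin n k) := by
  obtain ⟨⟨hdec, -, hsum⟩, hlen⟩ := hα
  refine majorizes_iff_sum_range_getD.mpr ⟨by rw [hsum, tauMin_sum hk hn], fun j hj => ?_⟩
  rw [tauMin_length, hlen, min_self] at hj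
  obtain rfl | hj0 := Nat.eq_zero_or_pos j
  · simp
  set q := (n - (k + 1).choose 2) / k
  by_cases hbig : k - j + q + 2 ≤ α.getD (j - 1) 0
  · refine sum_le_sum fun i hi => ?_
    rw [mem_range] at hi
    have := hdec.getD_add_sub_le (i := i) (j := j - 1) (by omega) (by omega)
    have := (tauMin_getD_bounds (n := n) (by omega : i < k)).2
    omega
  · refine sum_range_le_sum_range_of_tail_le hj ?_ fun i hi => ?_
    · rw [List.sum_range_getD_eq_sum (tauMin_length n k), List.sum_range_getD_eq_sum hlen,
        tauMin_sum hk hn, hsum]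
    · rw [mem_Ico] at hi
      have := hdec.getD_add_sub_le (i := j - 1) (j := i) (by omega) (by omega)
      have := (tauMin_getD_bounds (n := n) hi.2).1
      omega

theorem tauMax_majorizes (hk : 1 ≤ k) (hn : (k + 1).choose 2 ≤ n) {β : List ℕ}
    (hβ : DisPartK n k β) : Majorizes (tauMax n k) β := by
  obtain ⟨⟨hdec, hpos, hsum⟩, hlen⟩ := hβ
  refine majorizes_iff_sum_range_getD.mpr ⟨by rw [hsum, tauMax_sum hk hn], fun j hj => ?_⟩
  rw [tauMax_length n hk, hlen, min_self] at hj
  obtain rfl | hj0 := Nat.eq_zero_or_pos j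
  · simp
  refine sum_range_le_sum_range_of_tail_le hj ?_ fun i hi => ?_
  · rw [List.sum_range_getD_eq_sum hlen, List.sum_range_getD_eq_sum (tauMax_length n hk),
      tauMax_sum hk hn, hsum]
  · rw [mem_Ico] at hi
    rw [tauMax_getD (by omega) hi.2, ← hlen]
    exact hdec.length_sub_le_getD hpos (by omega)

end Extremal

/-- For k ≥ 1 and n ≥ C(k+1,2), an S-block [α|β] ∈ S-Block(n) belongs to
A(n,k) (i.e. α, β ∈ Dis_k(n)) iff [τ_k(n)|τ'_k(n)] ⪯ [α|β] and [α|β] ⪯ [γ|γ] for some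
γ ∈ Dis_k(n); hence A(n,k) is an amphora with minimum [τ_k(n)|τ'_k(n)] and maximal
antichain (Max)ⁿ_k = {[γ|γ] : γ ∈ Dis_k(n)}. -/
theorem stmt12 (n k : ℕ) (hk : 1 ≤ k) (hn : Nat.choose (k + 1) 2 ≤ n)
    (α β : List ℕ) (h : IsSBlock n α β) :
    (DisPartK n k α ∧ DisPartK n k β) ↔
      (BlockMaj α β (tauMin n k) (tauMax n k) ∧
        ∃ γ, DisPartK n k γ ∧ BlockMaj γ γ α β) := by
  obtain ⟨hα, hβ, hβα, hlen⟩ := h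
  constructor
  · rintro ⟨hαk, hβk⟩
    exact ⟨⟨majorizes_tauMin hk hn hαk, tauMax_majorizes hk hn hβk⟩,
      β, hβk, hβα, Majorizes.refl β⟩
  · rintro ⟨⟨hαmin, hmaxβ⟩, -⟩
    have hαle : α.length ≤ k := tauMin_length n k ▸ hαmin.length_le hα.2.1
    have hβge : k ≤ β.length := tauMax_length n hk ▸ hmaxβ.length_le (tauMax_pos hk hn)
    exact ⟨⟨hα, by omega⟩, ⟨hβ, by omega⟩⟩
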